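/- Let n ≥ 1 and m ≥ 1, let X = Fin n → ZMod 2 and Ym = Fin m → ZMod 2, and consider H = EuclideanSpace ℂ (X × Ym × (X → Ym)). Let U_FO := H_F · U_O · H_F be the Fourier Oracle unitary, where U_O is the permutation unitary induced by (x, y, r) ↦ (x, y + r x, r) and H_F is the Hadamard transform on the F-register. For each natural number l, let P_l be the orthogonal projection onto the span of the standard basis vectors e_{(x,y,r)} with |{x' ∈ X : r x' ≠ 0}| = l. Then P_j · U_FO · P_l = 0 whenever |j − l| ≥ 2; that is, one application of the Fourier Oracle query unitary changes the number of nonzero entries of the oracle register by at most one. -/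
import Mathlib


noncomputable section

/-- Index set of the computational basis: query input register `X = Fin n → ZMod 2`,
query output register `Ym = Fin m → ZMod 2`, Fourier Oracle register `X → Ym`. -/
abbrev QIdx (n m : ℕ) :=
  (Fin n → ZMod 2) × (Fin m → ZMod 2) × ((Fin n → ZMod 2) → (Fin m → ZMod 2))

/-- The standard oracle unitary `U_O`, the permutation matrix induced on standard basis
vectors by `(x, y, r) ↦ (x, y + r x, r)`. -/
def UOmat (n m : ℕ) : Matrix (QIdx n m) (QIdx n m) ℂ := fun p q =>
  if p = (q.1, q.2.1 + q.2.2 q.1, q.2.2) then 1 else 0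

/-- The Hadamard transform `H_F` on the Fourier-Oracle register, with matrix entries
`⟨e_(x',y',s), H_F e_(x,y,r)⟩ = δ_{x,x'} δ_{y,y'} 2^{-m·2ⁿ/2} (-1)^{Σ_{x''} Σ_j (r x'' j)(s x'' j)}`. -/
def HFmat (n m : ℕ) : Matrix (QIdx n m) (QIdx n m) ℂ := fun p q =>
  if p.1 = q.1 ∧ p.2.1 = q.2.1 then
    ((((Real.sqrt 2) ^ (m * 2 ^ n))⁻¹ : ℝ) : ℂ) *
      (-1 : ℂ) ^ (∑ x'' : Fin n → ZMod 2, ∑ j : Fin m, (q.2.2 x'' j).val * (p.2.2 x'' j).val)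
  else 0

/-- The Fourier Oracle unitary `U_FO = H_F · U_O · H_F`. -/
def UFOmat (n m : ℕ) : Matrix (QIdx n m) (QIdx n m) ℂ :=
  HFmat n m * UOmat n m * HFmat n m

/-- `P l`: the orthogonal projection onto the span of the standard basis vectors
`e_(x,y,r)` with exactly `l` nonzero entries of `r`. -/
def Pmat (n m : ℕ) (l : ℕ) : Matrix (QIdx n m) (QIdx n m) ℂ := fun p q =>
  if p = q ∧ (Finset.univ.filter fun x' : Fin n → ZMod 2 => p.2.2 x' ≠ 0).card = l
  then 1 else 0

namespace FOaux

lemma neg_one_pow_add_eq_zero {A B : ℕ} (h : (A + B) % 2 = 1) :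
    ((-1:ℂ))^A + (-1)^B = 0 := by
  have hc : A % 2 = 0 ∧ B % 2 = 1 ∨ A % 2 = 1 ∧ B % 2 = 0 := by omega
  rw [← Nat.div_add_mod A 2, ← Nat.div_add_mod B 2, pow_add, pow_add, pow_mul, pow_mul]
  rcases hc with ⟨h1,h2⟩|⟨h1,h2⟩ <;> simp [h1,h2]

lemma mod_two_of_cast {k : ℕ} (h : (k : ZMod 2) = 1) : k % 2 = 1 := by
  have h2 : ((k % 2 : ℕ) : ZMod 2) = 1 := by rwa [ZMod.natCast_mod]
  rcases Nat.mod_two_eq_zero_or_one k with h0 | h0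
  · rw [h0] at h2; exact absurd h2 (by decide)
  · exact h0

lemma parity_key (n m : ℕ) (P Q : (Fin n → ZMod 2) → Fin m → ZMod 2)
    (x0 : Fin n → ZMod 2) (j0 : Fin m) (hne : P x0 j0 ≠ Q x0 j0)
    (r : (Fin n → ZMod 2) → Fin m → ZMod 2)
    (r' : (Fin n → ZMod 2) → Fin m → ZMod 2)
    (hr' : r' = Function.update r x0 (Function.update (r x0) j0 (r x0 j0 + 1))) :
    (((∑ x'' : Fin n → ZMod 2, ∑ j : Fin m, (r x'' j).val * (P x'' j).val)
        + (∑ x'' : Fin n → ZMod 2, ∑ j : Fin m, (Q x'' j).val * (r x'' j).val))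
        + ((∑ x'' : Fin n → ZMod 2, ∑ j : Fin m, (r' x'' j).val * (P x'' j).val)
        + (∑ x'' : Fin n → ZMod 2, ∑ j : Fin m, (Q x'' j).val * (r' x'' j).val))) % 2 = 1 := by
  apply mod_two_of_cast
  push_cast
  simp only [ZMod.natCast_val, ZMod.cast_id]
  rw [← Finset.sum_add_distrib, ← Finset.sum_add_distrib, ← Finset.sum_add_distrib]
  have hterm : ∀ x'' : Fin n → ZMod 2,
      (((∑ j : Fin m, r x'' j * P x'' j) + (∑ j : Fin m, Q x'' j * r x'' j)) +
        ((∑ j : Fin m, r' x'' j * P x'' j) + (∑ j : Fin m, Q x'' j * r' x'' j)))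
      = if x'' = x0 then 1 else 0 := by
    intro x''
    rw [← Finset.sum_add_distrib, ← Finset.sum_add_distrib, ← Finset.sum_add_distrib]
    by_cases hx : x'' = x0
    · subst hx
      rw [if_pos rfl]
      have hterm2 : ∀ j : Fin m,
          (r x'' j * P x'' j + Q x'' j * r x'' j +
            (r' x'' j * P x'' j + Q x'' j * r' x'' j))
          = if j = j0 then 1 else 0 := by
        intro j
        by_cases hj : j = j0
        · subst hj
          have h1 : r' x'' j = r x'' j + 1 := by simp [hr']
          rw [h1, if_pos rfl]
          have h2 : P x'' j + Q x'' j = 1 := by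
            revert hne; generalize P x'' j = a; generalize Q x'' j = b; revert a b; decide
          have h3 : ∀ a b c : ZMod 2, b + c = 1 → a * b + c * a + ((a+1) * b + c * (a+1)) = 1 := by
            decide
          exact h3 _ _ _ h2
        · have h1 : r' x'' j = r x'' j := by simp [hr', Function.update_of_ne hj]
          rw [h1, if_neg hj]
          have h3 : ∀ a b c : ZMod 2, a * b + c * a + (a * b + c * a) = 0 := by decide
          exact h3 _ _ _
      rw [Finset.sum_congr rfl (fun j _ => hterm2 j)]
      simp
    · rw [if_neg hx]
      have h1 : r' x'' = r x'' := by simp [hr', Function.update_of_ne hx]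
      rw [h1]
      have h3 : ∀ a b c : ZMod 2, a * b + c * a + (a * b + c * a) = 0 := by decide
      rw [Finset.sum_congr rfl (fun j _ => h3 (r x'' j) (P x'' j) (Q x'' j))]
      simp
  rw [Finset.sum_congr rfl (fun x'' _ => hterm x'')]
  simp

lemma pair_cancel (n m : ℕ) (p q : QIdx n m) (y : Fin m → ZMod 2)
    (r r' : (Fin n → ZMod 2) → Fin m → ZMod 2) (hrb : r' q.1 = r q.1)
    (key : (((∑ x'' : Fin n → ZMod 2, ∑ j : Fin m, (r x'' j).val * (p.2.2 x'' j).val)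
        + (∑ x'' : Fin n → ZMod 2, ∑ j : Fin m, (q.2.2 x'' j).val * (r x'' j).val))
        + ((∑ x'' : Fin n → ZMod 2, ∑ j : Fin m, (r' x'' j).val * (p.2.2 x'' j).val)
        + (∑ x'' : Fin n → ZMod 2, ∑ j : Fin m, (q.2.2 x'' j).val * (r' x'' j).val))) % 2 = 1) :
    HFmat n m p (q.1, y + r q.1, r) * HFmat n m (q.1, y, r) q +
      HFmat n m p (q.1, y + r' q.1, r') * HFmat n m (q.1, y, r') q = 0 := by
  rw [hrb]
  simp only [HFmat]
  split_ifs with h1 h2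
  · set c : ℂ := ((((Real.sqrt 2) ^ (m * 2 ^ n))⁻¹ : ℝ) : ℂ) with hc
    set A1 : ℕ := ∑ x'' : Fin n → ZMod 2, ∑ j : Fin m, (r x'' j).val * (p.2.2 x'' j).val
    set A2 : ℕ := ∑ x'' : Fin n → ZMod 2, ∑ j : Fin m, (q.2.2 x'' j).val * (r x'' j).val
    set B1 : ℕ := ∑ x'' : Fin n → ZMod 2, ∑ j : Fin m, (r' x'' j).val * (p.2.2 x'' j).val
    set B2 : ℕ := ∑ x'' : Fin n → ZMod 2, ∑ j : Fin m, (q.2.2 x'' j).val * (r' x'' j).val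
    have hz : ((-1:ℂ))^(A1+A2) + (-1)^(B1+B2) = 0 := neg_one_pow_add_eq_zero key
    calc c * (-1:ℂ)^A1 * (c * (-1)^A2) + c * (-1)^B1 * (c * (-1)^B2)
        = c * c * (((-1:ℂ))^(A1+A2) + (-1)^(B1+B2)) := by rw [pow_add, pow_add]; ring
      _ = 0 := by rw [hz, mul_zero]
  all_goals ring

lemma UFO_entry_zero (n m : ℕ) (p q : QIdx n m)
    (x0 : Fin n → ZMod 2) (j0 : Fin m)
    (hx0 : x0 ≠ q.1) (hne : p.2.2 x0 j0 ≠ q.2.2 x0 j0) :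
    UFOmat n m p q = 0 := by
  classical
  have hcollapse : UFOmat n m p q
      = ∑ b : QIdx n m, HFmat n m p (b.1, b.2.1 + b.2.2 b.1, b.2.2) * HFmat n m b q := by
    simp only [UFOmat, Matrix.mul_apply]
    refine Finset.sum_congr rfl fun b _ => ?_
    congr 1
    simp [UOmat, mul_ite, mul_one, mul_zero, Finset.sum_ite_eq']
  rw [hcollapse]
  set upd : ((Fin n → ZMod 2) → (Fin m → ZMod 2)) → ((Fin n → ZMod 2) → (Fin m → ZMod 2)) :=
    fun r => Function.update r x0 (Function.update (r x0) j0 (r x0 j0 + 1)) with hupd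
  have hupd_at : ∀ r, upd r x0 j0 = r x0 j0 + 1 := by
    intro r; simp [hupd]
  have hupd_ne_x : ∀ r x, x ≠ x0 → upd r x = r x := by
    intro r x hx; simp [hupd, Function.update_of_ne hx]
  have hupd_ne_j : ∀ r j, j ≠ j0 → upd r x0 j = r x0 j := by
    intro r j hj; simp [hupd, Function.update_of_ne hj]
  have hinvol : ∀ r, upd (upd r) = r := by
    intro r
    funext x jj
    by_cases hx : x = x0
    · subst hx
      by_cases hj : jj = j0
      · subst hj; rw [hupd_at, hupd_at]
        have h3 : ∀ a : ZMod 2, a + 1 + 1 = a := by decide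
        exact h3 _
      · rw [hupd_ne_j _ _ hj, hupd_ne_j _ _ hj]
    · rw [hupd_ne_x _ _ hx, hupd_ne_x _ _ hx]
  refine Finset.sum_ninvolution (fun b => (b.1, b.2.1, upd b.2.2)) ?_ ?_
    (fun _ => Finset.mem_univ _) ?_
  · rintro ⟨x, y, r⟩
    simp only
    by_cases hbx : x = q.1
    · subst hbx
      have hrb : upd r q.1 = r q.1 := hupd_ne_x _ _ (Ne.symm hx0)
      by_cases hby : y = q.2.1
      · subst hby
        exact pair_cancel n m p q q.2.1 r (upd r) hrb
          (parity_key n m p.2.2 q.2.2 x0 j0 hne r (upd r) rfl)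
      · have hcond : ¬ (q.1 = q.1 ∧ y = q.2.1) := by simp [hby]
        have e1 : HFmat n m (q.1, y, r) q = 0 := by
          simp [HFmat, hby]
        have e2 : HFmat n m (q.1, y, upd r) q = 0 := by
          simp [HFmat, hby]
        rw [e1, e2, mul_zero, mul_zero, add_zero]
    · have hcond : ¬ (x = q.1 ∧ y = q.2.1) := by simp [hbx]
      have e1 : HFmat n m (x, y, r) q = 0 := by
        simp [HFmat, hbx]
      have e2 : HFmat n m (x, y, upd r) q = 0 := by
        simp [HFmat, hbx]
      rw [e1, e2, mul_zero, mul_zero, add_zero]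
  · rintro ⟨x, y, r⟩ _
    simp only [Prod.mk.injEq, ne_eq, not_and]
    intro _ _ hr
    have h4 := congrFun (congrFun hr x0) j0
    rw [hupd_at] at h4
    revert h4; generalize r x0 j0 = a; revert a; decide
  · rintro ⟨x, y, r⟩
    simp [hinvol r]

end FOaux

/-- One application of the Fourier Oracle query unitary changes the number of nonzero
entries of the oracle register by at most one: `P j · U_FO · P l = 0` when `|j - l| ≥ 2`. -/
theorem fourier_oracle_number_changes_by_one
    (n m : ℕ) (hn : 1 ≤ n) (hm : 1 ≤ m)
    (j l : ℕ) (h : 2 ≤ |(j : ℤ) - (l : ℤ)|) :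
    Pmat n m j * UFOmat n m * Pmat n m l = 0 := by
  classical
  have hdiag : ∀ k, Pmat n m k = Matrix.diagonal (fun p : QIdx n m =>
      if (Finset.univ.filter fun x' : Fin n → ZMod 2 => p.2.2 x' ≠ 0).card = k
      then (1:ℂ) else 0) := by
    intro k
    ext p q
    by_cases hpq : p = q
    · subst hpq; simp [Pmat, Matrix.diagonal]
    · simp [Pmat, Matrix.diagonal, hpq]
  rw [hdiag j, hdiag l]
  ext p q
  rw [Matrix.mul_diagonal, Matrix.diagonal_mul, Matrix.zero_apply]
  by_cases hjp : (Finset.univ.filter fun x' : Fin n → ZMod 2 => p.2.2 x' ≠ 0).card = j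
  swap
  · simp [hjp]
  by_cases hlq : (Finset.univ.filter fun x' : Fin n → ZMod 2 => q.2.2 x' ≠ 0).card = l
  swap
  · simp [hlq]
  rw [if_pos hjp, if_pos hlq, one_mul, mul_one]
  -- find a coordinate where p and q differ away from q.1
  have hex : ∃ x0, x0 ≠ q.1 ∧ p.2.2 x0 ≠ q.2.2 x0 := by
    by_contra hc
    push_neg at hc
    have herase : (Finset.univ.filter fun x' : Fin n → ZMod 2 => p.2.2 x' ≠ 0).erase q.1
        = (Finset.univ.filter fun x' : Fin n → ZMod 2 => q.2.2 x' ≠ 0).erase q.1 := by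
      ext a
      simp only [Finset.mem_erase, Finset.mem_filter, Finset.mem_univ, true_and]
      constructor
      · rintro ⟨ha, hv⟩; exact ⟨ha, by rwa [← hc a ha]⟩
      · rintro ⟨ha, hv⟩; exact ⟨ha, by rwa [hc a ha]⟩
    set A := Finset.univ.filter fun x' : Fin n → ZMod 2 => p.2.2 x' ≠ 0 with hA
    set B := Finset.univ.filter fun x' : Fin n → ZMod 2 => q.2.2 x' ≠ 0 with hB
    have hA1 : (A.erase q.1).card ≤ A.card := Finset.card_erase_le
    have hB1 : (B.erase q.1).card ≤ B.card := Finset.card_erase_le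
    have hA2 : A.card ≤ (A.erase q.1).card + 1 := by
      rcases Finset.decidableMem q.1 A with hq | hq
      · rw [Finset.erase_eq_of_notMem hq]; omega
      · rw [Finset.card_erase_of_mem hq]; omega
    have hB2 : B.card ≤ (B.erase q.1).card + 1 := by
      rcases Finset.decidableMem q.1 B with hq | hq
      · rw [Finset.erase_eq_of_notMem hq]; omega
      · rw [Finset.card_erase_of_mem hq]; omega
    rw [herase] at hA1 hA2
    rcases abs_cases ((j:ℤ) - (l:ℤ)) with ⟨h1, _⟩ | ⟨h1, _⟩ <;> omega
  obtain ⟨x0, hx0, hne⟩ := hex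
  obtain ⟨j0, hj0⟩ := Function.ne_iff.mp hne
  exact FOaux.UFO_entry_zero n m p q x0 j0 hx0 hj0

end
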